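/- Uniqueness of pluriharmonic symbols: if g, h ∈ H_m(𝔹) satisfy T_g p + T_h* p = 0 for all polynomials p, then g + \overline{h} = 0 as a function on 𝔹 (in particular g is the constant -\overline{h(0)} and h is constant). -/

import Mathlib

open scoped ComplexConjugate Classical

/-- The weight `ρ_m(α) = (m+|α|-1)!/(α!(m-1)!)`. -/
noncomputable def rhoR (m : ℕ) {n : ℕ} (α : Fin n → ℕ) : ℝ :=
  ((m + (∑ i, α i) - 1).factorial : ℝ) /
    ((∏ i, ((α i).factorial : ℝ)) * ((m - 1).factorial : ℝ))

/-- Coefficients of the product of two formal power series. -/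
noncomputable def convCoeff {n : ℕ} (f u : (Fin n → ℕ) → ℂ) : (Fin n → ℕ) → ℂ :=
  fun α => ∑ β ∈ Finset.Iic α, f β * u (α - β)

/-- Coefficients of `T_h* p` for a polynomial `p`. -/
noncomputable def TstarCoeff (m : ℕ) {n : ℕ} (p : (Fin n → ℕ) →₀ ℂ)
    (h : (Fin n → ℕ) → ℂ) : (Fin n → ℕ) → ℂ :=
  fun γ => ∑ α ∈ p.support,
    p α * (if γ ≤ α then ((rhoR m γ / rhoR m α : ℝ) : ℂ) * conj (h (α - γ)) else 0)

/-- Evaluation of a power series with coefficients `f` at a point `z` of the unit ball. -/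
noncomputable def evalSeries {n : ℕ} (f : (Fin n → ℕ) → ℂ) (z : Fin n → ℂ) : ℂ :=
  ∑' α : Fin n → ℕ, f α * ∏ i, z i ^ α i

/-
Testing `T_g p + T_h* p = 0` against `p = 1` gives `g γ + [γ = 0] conj (h 0) = 0` for every
multi-index `γ`. Testing it against `p = z^α` with `α ≠ 0`, the constant coefficient of `g z^α`
vanishes, so that of `T_h* z^α`, namely `(ρ_m(0) / ρ_m(α)) conj (h α)`, vanishes too; the weights
are positive, hence `h α = 0`.
-/
lemma rhoR_pos (m : ℕ) {n : ℕ} (α : Fin n → ℕ) : 0 < rhoR m α := by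
  unfold rhoR
  have hprod : 0 < ∏ i, ((α i).factorial : ℝ) :=
    Finset.prod_pos fun i _ => by exact_mod_cast Nat.factorial_pos _
  positivity

section Coefficients

variable {n : ℕ}

lemma convCoeff_single_zero_one (f : (Fin n → ℕ) → ℂ) :
    convCoeff f ⇑(Finsupp.single 0 1) = f := by
  funext γ
  unfold convCoeff
  rw [Finset.sum_eq_single_of_mem γ (Finset.mem_Iic.mpr le_rfl)]
  · simp
  · intro β hβ hne
    have hlt : β < γ := lt_of_le_of_ne (Finset.mem_Iic.mp hβ) hne
    rw [Finsupp.single_eq_of_ne (tsub_pos_of_lt hlt).ne', mul_zero]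

lemma convCoeff_apply_zero (f u : (Fin n → ℕ) → ℂ) : convCoeff f u 0 = f 0 * u 0 := by
  unfold convCoeff
  rw [Finset.sum_eq_single_of_mem 0 (Finset.mem_Iic.mpr le_rfl) fun β hβ hne =>
    absurd (nonpos_iff_eq_zero.mp (Finset.mem_Iic.mp hβ)) hne]
  rfl

lemma TstarCoeff_single (m : ℕ) (α : Fin n → ℕ) (c : ℂ) (h : (Fin n → ℕ) → ℂ)
    (γ : Fin n → ℕ) :
    TstarCoeff m (Finsupp.single α c) h γ =
      c * (if γ ≤ α then ((rhoR m γ / rhoR m α : ℝ) : ℂ) * conj (h (α - γ)) else 0) := by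
  rcases eq_or_ne c 0 with rfl | hc
  · simp [TstarCoeff]
  · simp [TstarCoeff, Finsupp.support_single α hc]

lemma TstarCoeff_single_zero_one (m : ℕ) (h : (Fin n → ℕ) → ℂ) (γ : Fin n → ℕ) :
    TstarCoeff m (Finsupp.single 0 1) h γ = if γ = 0 then conj (h 0) else 0 := by
  rw [TstarCoeff_single, one_mul]
  rcases eq_or_ne γ 0 with rfl | hγ
  · simp [div_self (rhoR_pos m (0 : Fin n → ℕ)).ne']
  · simp [hγ]

lemma TstarCoeff_single_one_apply_zero (m : ℕ) (α : Fin n → ℕ) (h : (Fin n → ℕ) → ℂ) :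
    TstarCoeff m (Finsupp.single α 1) h 0 =
      ((rhoR m (0 : Fin n → ℕ) / rhoR m α : ℝ) : ℂ) * conj (h α) := by
  simp [TstarCoeff_single]

lemma evalSeries_eq_apply_zero {f : (Fin n → ℕ) → ℂ} (hf : ∀ α, α ≠ 0 → f α = 0)
    (z : Fin n → ℂ) : evalSeries f z = f 0 := by
  unfold evalSeries
  rw [tsum_eq_single 0 fun α hα => by rw [hf α hα, zero_mul]]
  simp

end Coefficients

theorem pluriharmonic_symbol_unique_general (n m : ℕ)
    (g h : (Fin n → ℕ) → ℂ)
    (hzero : ∀ p : (Fin n → ℕ) →₀ ℂ, convCoeff g ⇑p + TstarCoeff m p h = 0) :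
    (∀ z : Fin n → ℂ, (∑ i, ‖z i‖ ^ 2) < 1 →
        evalSeries g z + conj (evalSeries h z) = 0) ∧
    (∀ α : Fin n → ℕ, α ≠ 0 → g α = 0 ∧ h α = 0) ∧
    g 0 + conj (h 0) = 0 := by
  have hconst (γ : Fin n → ℕ) : g γ + (if γ = 0 then conj (h 0) else 0) = 0 := by
    simpa [convCoeff_single_zero_one, TstarCoeff_single_zero_one] using
      congrFun (hzero (Finsupp.single 0 1)) γ
  have hg0 : g 0 + conj (h 0) = 0 := by simpa using hconst 0
  have hg (α) (hα : α ≠ 0) : g α = 0 := by simpa [hα] using hconst α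
  have hh (α) (hα : α ≠ 0) : h α = 0 := by
    simpa [convCoeff_apply_zero, TstarCoeff_single_one_apply_zero, hα,
      (rhoR_pos m 0).ne', (rhoR_pos m α).ne'] using
      congrFun (hzero (Finsupp.single α 1)) 0
  refine ⟨fun z _ => ?_, fun α hα => ⟨hg α hα, hh α hα⟩, hg0⟩
  rwa [evalSeries_eq_apply_zero hg, evalSeries_eq_apply_zero hh]

/-- Uniqueness of pluriharmonic symbols: if `g, h ∈ H_m(𝔹)` satisfy
`T_g p + T_h* p = 0` for all polynomials `p`, then `g + conj h = 0` as a function on `𝔹`;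
in particular `g` is the constant `-conj (h 0)` and `h` is constant. -/
theorem pluriharmonic_symbol_unique (n m : ℕ) (hm : 1 ≤ m)
    (g h : (Fin n → ℕ) → ℂ)
    (hg : Summable fun α => ‖g α‖ ^ 2 / rhoR m α)
    (hh : Summable fun α => ‖h α‖ ^ 2 / rhoR m α)
    (hzero : ∀ p : (Fin n → ℕ) →₀ ℂ, convCoeff g ⇑p + TstarCoeff m p h = 0) :
    (∀ z : Fin n → ℂ, (∑ i, ‖z i‖ ^ 2) < 1 →
        evalSeries g z + conj (evalSeries h z) = 0) ∧
    (∀ α : Fin n → ℕ, α ≠ 0 → g α = 0 ∧ h α = 0) ∧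
    g 0 + conj (h 0) = 0 :=
  pluriharmonic_symbol_unique_general n m g h hzero
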